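/- Let a, b be positive reals with a/b irrational. Then in ℝ⁴, the box a×a×b×b cannot be partitioned into finitely many boxes each of which has, in some three of its four coordinate directions, equal side lengths (i.e., boxes of type x×x×x×y up to permutation of coordinates). -/

import Mathlib

/-!
Since `a / b` is irrational, `a` and `b` are `ℚ`-linearly independent, so there are `ℚ`-linear
`f g : ℝ → ℚ` with `f a = g b = 1` and `f b = g a = 0`. A `ℚ`-multilinear function of the side
lengths of a box is additive under splitting a box by a hyperplane, hence its sum over the pieces
of a dissection equals its value on the whole box. Take the product of the `2 × 2` minors on the
columns `{0, 2}` and `{1, 3}` of the `2 × 4` matrix with columns `(f sⱼ, g sⱼ)`. A box with three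
equal sides has two equal columns in one of these minors, so the function vanishes on every piece,
while on `a × a × b × b` it equals `(f a g b - g a f b)² = 1`.
-/

/-- An axis-parallel box in ℝⁿ with positive side lengths. -/
structure Box (n : ℕ) where
  lower : Fin n → ℝ
  upper : Fin n → ℝ
  lower_lt_upper : ∀ i, lower i < upper i

namespace Box

/-- The closed box as a subset of ℝⁿ. -/
def toSet {n : ℕ} (B : Box n) : Set (Fin n → ℝ) :=
  Set.univ.pi fun i => Set.Icc (B.lower i) (B.upper i)

/-- The open interior of the box. -/
def interiorSet {n : ℕ} (B : Box n) : Set (Fin n → ℝ) :=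
  Set.univ.pi fun i => Set.Ioo (B.lower i) (B.upper i)

/-- The side length of the box in direction `i`. -/
def side {n : ℕ} (B : Box n) (i : Fin n) : ℝ := B.upper i - B.lower i

end Box

/-- The boxes `t` form a finite partition (dissection) of `B`:
pairwise disjoint interiors, and their union covers `B`. -/
def IsDissection {n m : ℕ} (B : Box n) (t : Fin m → Box n) : Prop :=
  (∀ i j, i ≠ j → Disjoint (t i).interiorSet (t j).interiorSet) ∧
  (⋃ i, (t i).toSet) = B.toSet

/-- `P` is cut by a hyperplane parallel to a pair of its faces into `P₁` and `P₂`. -/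
def IsSplit {n : ℕ} (P P₁ P₂ : Box n) : Prop :=
  ∃ (j : Fin n) (c : ℝ), P.lower j < c ∧ c < P.upper j ∧
    P₁.lower = P.lower ∧ P₁.upper = Function.update P.upper j c ∧
    P₂.lower = Function.update P.lower j c ∧ P₂.upper = P.upper

open Filter Topology

namespace Box

variable {n : ℕ}

def toBoxIntegral (P : Box n) : BoxIntegral.Box (Fin n) := ⟨P.lower, P.upper, P.lower_lt_upper⟩

theorem mem_toSet {P : Box n} {x : Fin n → ℝ} :
    x ∈ P.toSet ↔ ∀ j, P.lower j ≤ x j ∧ x j ≤ P.upper j := by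
  simp [toSet, Pi.le_def, forall_and]

theorem mem_interiorSet {P : Box n} {x : Fin n → ℝ} :
    x ∈ P.interiorSet ↔ ∀ j, P.lower j < x j ∧ x j < P.upper j := by
  simp [interiorSet]

theorem mem_toBoxIntegral {P : Box n} {x : Fin n → ℝ} :
    x ∈ P.toBoxIntegral ↔ ∀ j, P.lower j < x j ∧ x j ≤ P.upper j :=
  BoxIntegral.Box.mem_def _

theorem isClosed_toSet (P : Box n) : IsClosed P.toSet :=
  isClosed_set_pi fun _ _ => isClosed_Icc

theorem toBoxIntegral_le_of_toSet_subset {P Q : Box n} (h : P.toSet ⊆ Q.toSet) :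
    P.toBoxIntegral ≤ Q.toBoxIntegral := by
  have hlower := mem_toSet.1 (h (mem_toSet.2 fun j => ⟨le_rfl, (P.lower_lt_upper j).le⟩))
  have hupper := mem_toSet.1 (h (mem_toSet.2 fun j => ⟨(P.lower_lt_upper j).le, le_rfl⟩))
  exact BoxIntegral.Box.le_iff_bounds.2 ⟨fun j => (hlower j).1, fun j => (hupper j).2⟩

theorem not_disjoint_interiorSet_of_mem {P Q : Box n} {x : Fin n → ℝ}
    (hP : x ∈ P.toBoxIntegral) (hQ : x ∈ Q.toBoxIntegral) :
    ¬Disjoint P.interiorSet Q.interiorSet := by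
  rw [mem_toBoxIntegral] at hP hQ
  rw [Set.not_disjoint_iff]
  refine ⟨fun j => (max (P.lower j) (Q.lower j) + x j) / 2, mem_interiorSet.2 fun j => ?_,
    mem_interiorSet.2 fun j => ?_⟩ <;>
  · have := max_lt (hP j).1 (hQ j).1
    have := le_max_left (P.lower j) (Q.lower j)
    have := le_max_right (P.lower j) (Q.lower j)
    constructor <;> linarith [(hP j).2, (hQ j).2]

end Box

namespace IsDissection

variable {n m : ℕ} {B : Box n} {t : Fin m → Box n}

theorem exists_mem_toBoxIntegral (hd : IsDissection B t) {x : Fin n → ℝ}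
    (hx : x ∈ B.toBoxIntegral) : ∃ i, x ∈ (t i).toBoxIntegral := by
  rw [Box.mem_toBoxIntegral] at hx
  -- Points `p k` of `B` increase to `x` along the diagonal from `B.lower`; a piece containing
  -- infinitely many of them contains `x` (it is closed) and has lower corner below all of them.
  set p : ℕ → Fin n → ℝ := fun k j => x j - (x j - B.lower j) / (k + 1)
  have hp_lt : ∀ k j, p k j < x j := fun k j =>
    sub_lt_self _ (div_pos (sub_pos.2 (hx j).1) k.cast_add_one_pos)
  have hp_mem : ∀ k, p k ∈ B.toSet := fun k => Box.mem_toSet.2 fun j =>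
    ⟨le_sub_comm.2 (div_le_self (sub_pos.2 (hx j).1).le (by simp)),
      (hp_lt k j).le.trans (hx j).2⟩
  have hp_lim : Tendsto p atTop (𝓝 x) := tendsto_pi_nhds.2 fun j => by
    simpa using tendsto_const_nhds.sub
      ((tendsto_const_nhds (x := x j - B.lower j)).div_atTop
        (tendsto_natCast_atTop_atTop.atTop_add tendsto_const_nhds))
  choose F hF using fun k => Set.mem_iUnion.1 (hd.2 ▸ hp_mem k)
  obtain ⟨i, hi⟩ := Finite.exists_infinite_fiber F
  have hfreq : ∃ᶠ k in atTop, p k ∈ (t i).toSet :=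
    Nat.frequently_atTop_iff_infinite.2 <|
      (Set.infinite_coe_iff.1 hi).mono fun k (hk : F k = i) => hk ▸ hF k
  have hx_mem := Box.mem_toSet.1 ((t i).isClosed_toSet.mem_of_frequently_of_tendsto hfreq hp_lim)
  obtain ⟨k, hk⟩ := hfreq.exists
  exact ⟨i, Box.mem_toBoxIntegral.2 fun j =>
    ⟨((Box.mem_toSet.1 hk) j).1.trans_lt (hp_lt k j), (hx_mem j).2⟩⟩

theorem injective_toBoxIntegral (hd : IsDissection B t) :
    Function.Injective fun i => (t i).toBoxIntegral := by
  intro i j hij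
  by_contra hne
  have hi : (t i).upper ∈ (t i).toBoxIntegral :=
    Box.mem_toBoxIntegral.2 fun k => ⟨(t i).lower_lt_upper k, le_rfl⟩
  exact Box.not_disjoint_interiorSet_of_mem hi
    ((show (t i).toBoxIntegral = (t j).toBoxIntegral from hij) ▸ hi) (hd.1 i j hne)

def prepartition (hd : IsDissection B t) : BoxIntegral.Prepartition B.toBoxIntegral where
  boxes := Finset.univ.map ⟨_, hd.injective_toBoxIntegral⟩
  le_of_mem' := by
    simp only [Finset.mem_map, Finset.mem_univ, true_and, Function.Embedding.coeFn_mk,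
      forall_exists_index, forall_apply_eq_imp_iff]
    exact fun i =>
      Box.toBoxIntegral_le_of_toSet_subset (hd.2 ▸ Set.subset_iUnion (fun i => (t i).toSet) i)
  pairwiseDisjoint := by
    simp only [Finset.coe_map, Finset.coe_univ, Set.image_univ, Function.Embedding.coeFn_mk]
    rintro _ ⟨i, rfl⟩ _ ⟨j, rfl⟩ hne
    refine Set.disjoint_left.2 fun x hi hj => ?_
    exact Box.not_disjoint_interiorSet_of_mem hi hj (hd.1 i j fun h => hne (h ▸ rfl))

theorem isPartition_prepartition (hd : IsDissection B t) : hd.prepartition.IsPartition := by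
  intro x hx
  obtain ⟨i, hi⟩ := hd.exists_mem_toBoxIntegral hx
  exact ⟨_, Finset.mem_map_of_mem _ (Finset.mem_univ i), hi⟩

theorem sum_boxAdditiveMap {M : Type*} [AddCommMonoid M] (hd : IsDissection B t)
    (F : BoxIntegral.BoxAdditiveMap (Fin n) M ⊤) :
    ∑ i, F (t i).toBoxIntegral = F B.toBoxIntegral := by
  rw [← F.sum_partition_boxes le_top hd.isPartition_prepartition, prepartition,
    Finset.sum_map]
  rfl

end IsDissection

section Multilinear

variable {n : ℕ} {R M : Type*} [Semiring R] [AddCommMonoid M] [Module R ℝ] [Module R M]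

def MultilinearMap.toBoxAdditiveMap (φ : MultilinearMap R (fun _ : Fin n => ℝ) M) :
    BoxIntegral.BoxAdditiveMap (Fin n) M ⊤ :=
  .ofMapSplitAdd (fun I => φ (I.upper - I.lower)) ⊤ fun I _ {i} {x} hx => by
    rw [BoxIntegral.Box.splitLower_def hx, BoxIntegral.Box.splitUpper_def hx]
    show φ _ + φ _ = φ _
    have hl : Function.update I.upper i x - I.lower =
        Function.update (I.upper - I.lower) i (x - I.lower i) := by
      ext j; rcases eq_or_ne j i with rfl | h <;> simp [*]
    have hu : I.upper - Function.update I.lower i x =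
        Function.update (I.upper - I.lower) i (I.upper i - x) := by
      ext j; rcases eq_or_ne j i with rfl | h <;> simp [*]
    rw [hl, hu, ← φ.map_update_add, sub_add_sub_cancel', Function.update_eq_self_iff.2]
    rfl

theorem IsDissection.sum_multilinearMap {m : ℕ} {B : Box n} {t : Fin m → Box n}
    (hd : IsDissection B t) (φ : MultilinearMap R (fun _ : Fin n => ℝ) M) :
    ∑ i, φ (t i).side = φ B.side :=
  hd.sum_boxAdditiveMap φ.toBoxAdditiveMap

end Multilinear

theorem exists_linearMap_eq_one_eq_zero {a b : ℝ} (hirr : Irrational (a / b)) :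
    ∃ f : ℝ →ₗ[ℚ] ℚ, f a = 1 ∧ f b = 0 := by
  have hb : b ≠ 0 := (div_ne_zero_iff.1 hirr.ne_zero).2
  have ha : a ∉ Submodule.span ℚ {b} := by
    intro h
    obtain ⟨q, rfl⟩ := Submodule.mem_span_singleton.1 h
    exact hirr.ne_rat q (by rw [Rat.smul_def, mul_div_cancel_right₀ _ hb])
  obtain ⟨f, hfa, hf⟩ := Submodule.exists_dual_map_eq_bot_of_notMem ha inferInstance
  have hfb : f b = 0 :=
    LinearMap.mem_ker.1 (LinearMap.le_ker_iff_map.2 hf (Submodule.mem_span_singleton_self b))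
  exact ⟨(f a)⁻¹ • f, inv_mul_cancel₀ hfa, by simp [hfb]⟩

section MinorProduct

variable {R V : Type*} [CommRing R] [AddCommGroup V] [Module R V]

def minorProduct (f g : V →ₗ[R] R) : MultilinearMap R (fun _ : Fin 4 => V) R :=
  let π := MultilinearMap.mkPiAlgebra R (Fin 4) R
  π.compLinearMap ![f, f, g, g] - π.compLinearMap ![f, g, g, f] -
    π.compLinearMap ![g, f, f, g] + π.compLinearMap ![g, g, f, f]

theorem minorProduct_apply (f g : V →ₗ[R] R) (s : Fin 4 → V) :
    minorProduct f g s =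
      (f (s 0) * g (s 2) - g (s 0) * f (s 2)) * (f (s 1) * g (s 3) - g (s 1) * f (s 3)) := by
  simp [minorProduct, Fin.prod_univ_four]
  ring

theorem minorProduct_eq_zero_of_forall_ne (f g : V →ₗ[R] R) {s : Fin 4 → V} {k : Fin 4} {x : V}
    (hs : ∀ j ≠ k, s j = x) : minorProduct f g s = 0 := by
  rw [minorProduct_apply]
  fin_cases k <;> simp [hs, mul_comm]

end MinorProduct

theorem Box.side_eq_of_ne_symm_apply {P : Box 4} {σ : Equiv.Perm (Fin 4)} {x y : ℝ}
    (hP : P.side = ![x, x, x, y] ∘ σ) {j : Fin 4} (hj : j ≠ σ.symm 3) : P.side j = x := by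
  have hσj : σ j ≠ 3 := fun h => hj (σ.eq_symm_apply.2 h)
  rw [hP, Function.comp_apply]
  generalize σ j = k at hσj
  fin_cases k <;> simp_all

theorem aabb_not_into_xxxy_general (a b : ℝ) (hirr : Irrational (a / b)) :
    ∀ B : Box 4, B.side = ![a, a, b, b] →
      ¬ ∃ (m : ℕ) (t : Fin m → Box 4), IsDissection B t ∧
        ∀ i, ∃ (σ : Equiv.Perm (Fin 4)) (x y : ℝ),
          (t i).side = ![x, x, x, y] ∘ σ := by
  rintro B hB ⟨m, t, hd, hshape⟩
  obtain ⟨f, hfa, hfb⟩ := exists_linearMap_eq_one_eq_zero hirr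
  obtain ⟨g, hgb, hga⟩ := exists_linearMap_eq_one_eq_zero (inv_div a b ▸ hirr.inv)
  have hpiece : ∀ i, minorProduct f g (t i).side = 0 := fun i => by
    obtain ⟨σ, x, y, hσ⟩ := hshape i
    exact minorProduct_eq_zero_of_forall_ne f g fun j => Box.side_eq_of_ne_symm_apply hσ
  have hsum := hd.sum_multilinearMap (minorProduct f g)
  simp [hpiece, hB, minorProduct_apply, hfa, hfb, hga, hgb] at hsum

/-- If `a / b` is irrational, the 4-dimensional box `a × a × b × b` cannot be
partitioned into boxes of type `x × x × x × y` (up to permutation of coordinates). -/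
theorem aabb_not_into_xxxy (a b : ℝ) (ha : 0 < a) (hb : 0 < b)
    (hirr : Irrational (a / b)) :
    ∀ B : Box 4, B.side = ![a, a, b, b] →
      ¬ ∃ (m : ℕ) (t : Fin m → Box 4), IsDissection B t ∧
        ∀ i, ∃ (σ : Equiv.Perm (Fin 4)) (x y : ℝ),
          (t i).side = ![x, x, x, y] ∘ σ :=
  aabb_not_into_xxxy_general a b hirr
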